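/- arXiv:1410.5952 — 2 statements merged into one kernel-verified Lean document; each statement's English description precedes it below -/
import Mathlib

section
/- Let x* be a feasible vector for the illumination constraints with fading function ρ that minimizes the total energy Σ_g x*_g. Suppose ρ/(1+ε) < τ ≤ ρ pointwise. Then (1+ε)·x* is feasible for the constraints with τ, and hence the optimum value of the τ-problem is at most (1+ε) times the optimum of the ρ-problem. Consequently any optimal solution for the τ-problem is a (1+ε)-approximation of the ρ-problem. -/
theorem tau_opt_approximates_rho_opt {G W : Type*} [Fintype G]
    (vis : W → Finset G) (τ ρ : G → W → ℝ) (ε : ℝ) (hε : 0 < ε)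
    (hτnonneg : ∀ g w, 0 ≤ τ g w) (hρnonneg : ∀ g w, 0 ≤ ρ g w)
    (happrox : ∀ g w, ρ g w / (1 + ε) < τ g w ∧ τ g w ≤ ρ g w)
    (xstar : G → ℝ) (hxstar_nonneg : ∀ g, 0 ≤ xstar g)
    (hxstar_feas : ∀ w, 1 ≤ ∑ g ∈ vis w, ρ g w * xstar g)
    (hxstar_opt : ∀ x : G → ℝ, (∀ g, 0 ≤ x g) →
      (∀ w, 1 ≤ ∑ g ∈ vis w, ρ g w * x g) → ∑ g, xstar g ≤ ∑ g, x g) :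
    ((∀ g, 0 ≤ (1 + ε) * xstar g) ∧
      (∀ w, 1 ≤ ∑ g ∈ vis w, τ g w * ((1 + ε) * xstar g))) ∧
    (∀ y : G → ℝ, (∀ g, 0 ≤ y g) → (∀ w, 1 ≤ ∑ g ∈ vis w, τ g w * y g) →
      (∀ x : G → ℝ, (∀ g, 0 ≤ x g) → (∀ w, 1 ≤ ∑ g ∈ vis w, τ g w * x g) →
        ∑ g, y g ≤ ∑ g, x g) →
      ∑ g, y g ≤ (1 + ε) * ∑ g, xstar g) := by
  have h1ε : (0:ℝ) < 1 + ε := by linarith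
  have hfeas : ∀ w, 1 ≤ ∑ g ∈ vis w, τ g w * ((1 + ε) * xstar g) := by
    intro w
    refine le_trans (hxstar_feas w) (Finset.sum_le_sum fun g _ => ?_)
    have h := (happrox g w).1
    have hρτ : ρ g w ≤ (1 + ε) * τ g w := by
      rw [div_lt_iff₀ h1ε] at h; nlinarith
    have := mul_le_mul_of_nonneg_right hρτ (hxstar_nonneg g)
    linarith
  refine ⟨⟨fun g => mul_nonneg h1ε.le (hxstar_nonneg g), hfeas⟩, ?_⟩
  intro y hy hyfeas hyopt
  have := hyopt (fun g => (1 + ε) * xstar g)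
    (fun g => mul_nonneg h1ε.le (hxstar_nonneg g)) hfeas
  calc ∑ g, y g ≤ ∑ g, (1 + ε) * xstar g := this
    _ = (1 + ε) * ∑ g, xstar g := by rw [Finset.mul_sum]
end

section
/- Let S ⊂ ℝ^d be a simplex with vertices v₀,…,v_m and let f : S → ℝ be Lipschitz with constant L. Let z_j = f(v_j) and let z* = min over x ∈ S of f(x). Then z* ≥ (1/(m+1)) · ( Σ_{j=0}^{m} z_j − L · max_{0 ≤ i ≤ m} Σ_{j=0}^{m} ‖v_i − v_j‖ ). -/
theorem lipschitz_simplex_lower_bound (d m : ℕ)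
    (v : Fin (m + 1) → EuclideanSpace ℝ (Fin d))
    (f : EuclideanSpace ℝ (Fin d) → ℝ) (L : ℝ) (hL : 0 ≤ L)
    (hf : ∀ x ∈ convexHull ℝ (Set.range v), ∀ y ∈ convexHull ℝ (Set.range v),
      |f x - f y| ≤ L * ‖x - y‖)
    (xstar : EuclideanSpace ℝ (Fin d)) (hx : xstar ∈ convexHull ℝ (Set.range v))
    (hmin : ∀ x ∈ convexHull ℝ (Set.range v), f xstar ≤ f x) :
    (1 / (m + 1 : ℝ)) * ((∑ j, f (v j)) -
        L * (Finset.univ.sup' Finset.univ_nonempty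
          (fun i => ∑ j, ‖v i - v j‖))) ≤ f xstar := by
  classical
  set M : ℝ := Finset.univ.sup' Finset.univ_nonempty (fun i => ∑ j, ‖v i - v j‖) with hM
  have hx' := hx
  rw [convexHull_range_eq_exists_affineCombination] at hx'
  obtain ⟨s, w, hw₀, hw₁, hws⟩ := hx'
  rw [s.affineCombination_eq_linear_combination v w hw₁] at hws
  have hvmem : ∀ j, v j ∈ convexHull ℝ (Set.range v) := fun j =>
    subset_convexHull ℝ _ ⟨j, rfl⟩
  -- bound on each ‖v j - xstar‖
  have hnorm : ∀ j : Fin (m + 1), ‖v j - xstar‖ ≤ ∑ i ∈ s, w i * ‖v j - v i‖ := by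
    intro j
    have h1 : v j - xstar = ∑ i ∈ s, w i • (v j - v i) := by
      rw [← hws]
      simp [smul_sub, Finset.sum_sub_distrib, ← Finset.sum_smul, hw₁]
    rw [h1]
    calc ‖∑ i ∈ s, w i • (v j - v i)‖ ≤ ∑ i ∈ s, ‖w i • (v j - v i)‖ :=
          norm_sum_le _ _
      _ = ∑ i ∈ s, w i * ‖v j - v i‖ := by
          refine Finset.sum_congr rfl fun i hi => ?_
          rw [norm_smul, Real.norm_eq_abs, abs_of_nonneg (hw₀ i hi)]
  -- sum of distances bound
  have hsum : ∑ j : Fin (m + 1), ‖v j - xstar‖ ≤ M := by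
    calc ∑ j : Fin (m + 1), ‖v j - xstar‖
        ≤ ∑ j : Fin (m + 1), ∑ i ∈ s, w i * ‖v j - v i‖ :=
          Finset.sum_le_sum fun j _ => hnorm j
      _ = ∑ i ∈ s, w i * ∑ j : Fin (m + 1), ‖v i - v j‖ := by
          rw [Finset.sum_comm]
          refine Finset.sum_congr rfl fun i _ => ?_
          rw [Finset.mul_sum]
          exact Finset.sum_congr rfl fun j _ => by rw [norm_sub_rev]
      _ ≤ ∑ i ∈ s, w i * M := by
          refine Finset.sum_le_sum fun i hi => ?_
          exact mul_le_mul_of_nonneg_left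
            (Finset.le_sup' (fun i => ∑ j, ‖v i - v j‖) (Finset.mem_univ i)) (hw₀ i hi)
      _ = M := by rw [← Finset.sum_mul, hw₁, one_mul]
  -- main inequality
  have key : (∑ j, f (v j)) - (m + 1 : ℝ) * f xstar ≤ L * M := by
    have h1 : ∀ j : Fin (m + 1), f (v j) - f xstar ≤ L * ‖v j - xstar‖ := fun j =>
      (le_abs_self _).trans (hf (v j) (hvmem j) xstar hx)
    calc (∑ j, f (v j)) - (m + 1 : ℝ) * f xstar
        = ∑ j : Fin (m + 1), (f (v j) - f xstar) := by
          rw [Finset.sum_sub_distrib, Finset.sum_const]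
          simp [mul_comm]
      _ ≤ ∑ j : Fin (m + 1), L * ‖v j - xstar‖ := Finset.sum_le_sum fun j _ => h1 j
      _ = L * ∑ j : Fin (m + 1), ‖v j - xstar‖ := by rw [Finset.mul_sum]
      _ ≤ L * M := mul_le_mul_of_nonneg_left hsum hL
  have hm : (0 : ℝ) < m + 1 := by positivity
  rw [one_div, inv_mul_le_iff₀ hm, mul_comm]
  linarith
end
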